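/- arXiv:1705.03749 — 2 statements merged into one kernel-verified Lean document; each statement's English description precedes it below -/
import Mathlib

section
/- Let n be a natural number and let y : ℝ → ℝ be four times continuously differentiable on a neighborhood of 0, with y(0) = 1 and y'(0) = 0, and suppose x·y''(x) + 2·y'(x) + x·y(x)ⁿ = 0 for all x in that neighborhood. Then y''(0) = −1/3 and y⁗(0) = n/5. -/
/-!
Differentiating `x y'' + 2 y' + x g = 0`, where `g = yⁿ`, twice on an open neighbourhood of `0`
gives `x (y''' + g') + 3 y'' + g = 0` and `x (y⁗ + g'') + 4 y''' + 2 g' = 0`. At `x = 0` the first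
gives `3 y''(0) + 1 = 0`. The second can be differentiated once more at `0` although `y⁗` and `g''`
are only continuous, because `t ↦ t h(t)` has derivative `h(0)` at `0` for every `h`
continuous at `0`; this gives `5 y⁗(0) + 3 g''(0) = 0`, and `g''(0) = n y''(0)` since `y'(0) = 0`.
-/

open Filter Topology

section Calculus

variable {𝕜 : Type*} [NontriviallyNormedField 𝕜] {E : Type*} [NormedAddCommGroup E]
  [NormedSpace 𝕜 E]

theorem HasDerivAt.eq_zero_of_forall_mem {F : 𝕜 → E} {F' : E} {u : Set 𝕜} {x : 𝕜}
    (h : HasDerivAt F F' x) (hu : IsOpen u) (hx : x ∈ u) (hF : ∀ t ∈ u, F t = 0) : F' = 0 :=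
  h.unique <| (hasDerivAt_const x 0).congr_of_eventuallyEq <|
    eventually_of_mem (hu.mem_nhds hx) hF

theorem hasDerivAt_id_smul_of_continuousAt {g : 𝕜 → E} (hg : ContinuousAt g 0) :
    HasDerivAt (fun t => t • g t) (g 0) 0 := by
  rw [hasDerivAt_iff_tendsto_slope]
  refine (hg.continuousWithinAt (s := {0}ᶜ)).tendsto.congr' ?_
  filter_upwards [self_mem_nhdsWithin] with t (ht : t ≠ 0)
  rw [slope_def_module, zero_smul, sub_zero, sub_zero, smul_smul, inv_mul_cancel₀ ht, one_smul]

namespace ContDiffOn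

variable {f : 𝕜 → E} {s : Set 𝕜} {n : WithTop ℕ∞} {x : 𝕜}

theorem iteratedDeriv_of_isOpen {m : WithTop ℕ∞} (hf : ContDiffOn 𝕜 n f s) (hs : IsOpen s)
    (k : ℕ) (hkm : m + k ≤ n) : ContDiffOn 𝕜 m (iteratedDeriv k f) s := by
  induction k generalizing m with
  | zero => simpa using hf.of_le (by simpa using hkm)
  | succ k ih =>
    rw [iteratedDeriv_succ]
    refine (ih (m := m + 1) ?_).deriv_of_isOpen hs le_rfl
    simpa [add_assoc, add_comm (1 : WithTop ℕ∞)] using hkm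

theorem hasDerivAt_iteratedDeriv (hf : ContDiffOn 𝕜 n f s) (hs : IsOpen s) (hx : x ∈ s)
    {k : ℕ} (hk : k + 1 ≤ n) :
    HasDerivAt (iteratedDeriv k f) (iteratedDeriv (k + 1) f x) x := by
  rw [iteratedDeriv_succ]
  refine (((hf.iteratedDeriv_of_isOpen hs k (m := 1) ?_).differentiableOn one_ne_zero) x hx
    |>.differentiableAt (hs.mem_nhds hx)).hasDerivAt
  simpa [add_comm] using hk

theorem continuousAt_iteratedDeriv (hf : ContDiffOn 𝕜 n f s) (hs : IsOpen s) (hx : x ∈ s)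
    {k : ℕ} (hk : k ≤ n) : ContinuousAt (iteratedDeriv k f) x :=
  ((hf.iteratedDeriv_of_isOpen hs k (m := 0) (by simpa using hk)).continuousOn x hx).continuousAt
    (hs.mem_nhds hx)

end ContDiffOn

theorem iteratedDeriv_two_pow_of_deriv_eq_zero {y : 𝕜 → 𝕜} {x : 𝕜} (n : ℕ)
    (hy : ∀ᶠ t in 𝓝 x, DifferentiableAt 𝕜 y t) (hy' : DifferentiableAt 𝕜 (deriv y) x)
    (h1 : deriv y x = 0) :
    iteratedDeriv 2 (y · ^ n) x = n * y x ^ (n - 1) * iteratedDeriv 2 y x := by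
  have hpow : deriv (y · ^ n) =ᶠ[𝓝 x] fun t => n * y t ^ (n - 1) * deriv y t :=
    hy.mono fun t ht => (ht.hasDerivAt.pow n).deriv
  have hprod := ((hy.self_of_nhds.hasDerivAt.fun_pow (n - 1)).const_mul (n : 𝕜)).fun_mul
    hy'.hasDerivAt
  rw [iteratedDeriv_succ, iteratedDeriv_one, hpow.deriv_eq, hprod.deriv, iteratedDeriv_succ,
    iteratedDeriv_one, h1]
  ring

end Calculus

namespace LaneEmden

variable {𝕜 : Type*} [NontriviallyNormedField 𝕜] {y g : 𝕜 → 𝕜} {u : Set 𝕜}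

theorem ode_deriv (hu : IsOpen u) (hy : ContDiffOn 𝕜 3 y u) (hg : ContDiffOn 𝕜 1 g u)
    (hode : ∀ x ∈ u, x * iteratedDeriv 2 y x + 2 * iteratedDeriv 1 y x + x * g x = 0) :
    ∀ x ∈ u,
      x * (iteratedDeriv 3 y x + iteratedDeriv 1 g x) + 3 * iteratedDeriv 2 y x + g x = 0 := by
  intro x hx
  have hg0 := hg.hasDerivAt_iteratedDeriv hu hx (k := 0) (by norm_num)
  rw [iteratedDeriv_zero] at hg0
  have hD := ((hasDerivAt_id' x).fun_mul (hy.hasDerivAt_iteratedDeriv hu hx (k := 2) (by norm_num))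
    |>.fun_add ((hy.hasDerivAt_iteratedDeriv hu hx (k := 1) (by norm_num)).const_mul 2)).fun_add
    ((hasDerivAt_id' x).fun_mul hg0)
  linear_combination hD.eq_zero_of_forall_mem hu hx hode

theorem ode_deriv_deriv (hu : IsOpen u) (hy : ContDiffOn 𝕜 4 y u) (hg : ContDiffOn 𝕜 2 g u)
    (hode : ∀ x ∈ u, x * iteratedDeriv 2 y x + 2 * iteratedDeriv 1 y x + x * g x = 0) :
    ∀ x ∈ u, x * (iteratedDeriv 4 y x + iteratedDeriv 2 g x) + 4 * iteratedDeriv 3 y x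
      + 2 * iteratedDeriv 1 g x = 0 := by
  intro x hx
  have hg0 := hg.hasDerivAt_iteratedDeriv hu hx (k := 0) (by norm_num)
  rw [iteratedDeriv_zero] at hg0
  have hD := ((hasDerivAt_id' x).fun_mul
      ((hy.hasDerivAt_iteratedDeriv hu hx (k := 3) (by norm_num)).fun_add
        (hg.hasDerivAt_iteratedDeriv hu hx (k := 1) (by norm_num)))
    |>.fun_add ((hy.hasDerivAt_iteratedDeriv hu hx (k := 2) (by norm_num)).const_mul 3)).fun_add hg0
  linear_combination hD.eq_zero_of_forall_mem hu hx
    (ode_deriv hu (hy.of_le (by norm_num)) (hg.of_le (by norm_num)) hode)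

theorem iteratedDeriv_two_and_four_at_zero (hu : IsOpen u) (h0 : (0 : 𝕜) ∈ u)
    (hy : ContDiffOn 𝕜 4 y u) (hg : ContDiffOn 𝕜 2 g u)
    (hode : ∀ x ∈ u, x * iteratedDeriv 2 y x + 2 * iteratedDeriv 1 y x + x * g x = 0) :
    3 * iteratedDeriv 2 y 0 + g 0 = 0 ∧
      5 * iteratedDeriv 4 y 0 + 3 * iteratedDeriv 2 g 0 = 0 := by
  refine ⟨by simpa using
    ode_deriv hu (hy.of_le (by norm_num)) (hg.of_le (by norm_num)) hode 0 h0, ?_⟩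
  have hD := (hasDerivAt_id_smul_of_continuousAt
      ((hy.continuousAt_iteratedDeriv hu h0 (k := 4) (by norm_num)).fun_add
        (hg.continuousAt_iteratedDeriv hu h0 (k := 2) (by norm_num)))).fun_add
    ((hy.hasDerivAt_iteratedDeriv hu h0 (k := 3) (by norm_num)).const_mul 4) |>.fun_add
    ((hg.hasDerivAt_iteratedDeriv hu h0 (k := 1) (by norm_num)).const_mul 2)
  linear_combination hD.eq_zero_of_forall_mem hu h0 (ode_deriv_deriv hu hy hg hode)

end LaneEmden

theorem laneEmden_plus_derivs (n : ℕ) (y : ℝ → ℝ) (s : Set ℝ) (hs : s ∈ nhds (0 : ℝ))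
    (hy : ContDiffOn ℝ 4 y s) (h0 : y 0 = 1) (h1 : deriv y 0 = 0)
    (hode : ∀ x ∈ s, x * deriv (deriv y) x + 2 * deriv y x + x * (y x) ^ n = 0) :
    iteratedDeriv 2 y 0 = -1 / 3 ∧ iteratedDeriv 4 y 0 = n / 5 := by
  obtain ⟨u, hus, hu, h0u⟩ := mem_nhds_iff.mp hs
  have hyu : ContDiffOn ℝ 4 y u := hy.mono hus
  have hodeu : ∀ x ∈ u, x * iteratedDeriv 2 y x + 2 * iteratedDeriv 1 y x + x * y x ^ n = 0 := by
    simpa only [iteratedDeriv_succ, iteratedDeriv_zero] using fun x hx => hode x (hus hx)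
  obtain ⟨hy2, hy4⟩ := LaneEmden.iteratedDeriv_two_and_four_at_zero hu h0u hyu
    ((hyu.pow n).of_le (by norm_num)) hodeu
  have hy2' : iteratedDeriv 2 y 0 = -1 / 3 := by
    simp only [h0, one_pow] at hy2
    linarith
  have hpow2 : iteratedDeriv 2 (y · ^ n) 0 = -n / 3 := by
    have hdy : ∀ x ∈ u, DifferentiableAt ℝ y x := fun x hx =>
      (hyu.contDiffAt (hu.mem_nhds hx)).differentiableAt (by norm_num)
    have hdy' : DifferentiableAt ℝ (deriv y) 0 := by
      simpa only [iteratedDeriv_one] using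
        (hyu.hasDerivAt_iteratedDeriv hu h0u (k := 1) (by norm_num)).differentiableAt
    rw [iteratedDeriv_two_pow_of_deriv_eq_zero n (eventually_of_mem (hu.mem_nhds h0u) hdy)
      hdy' h1, h0, one_pow, hy2']
    ring
  exact ⟨hy2', by linarith⟩
end

section
/- Let y be a formal power series over ℚ with coefficients A₀, A₁, A₂, … such that A₀ = 0, A₁ = 0, and y satisfies the formal differential equation X·y'' + 2·y' + X·y = 6X + 12X² + X³ + X⁴, where y' and y'' denote the first and second formal derivatives of y. Then y = X² + X³, i.e., A₂ = 1, A₃ = 1, and A_m = 0 for all m ≠ 2, 3. -/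
/-!
At degree `n + 1` the operator `y ↦ X y'' + 2 y' + X y` has coefficient
`(n + 2)(n + 3) a_{n+2} + a_n`, so over a domain of characteristic zero a solution is determined
by `a₀` and `a₁`. By linearity it therefore suffices to check that `X² + X³`, which has
`a₀ = a₁ = 0`, solves the equation.
-/

namespace PowerSeries

variable {R : Type*} [CommRing R]

theorem derivative_ofNat (n : ℕ) [n.AtLeastTwo] : d⁄dX R (no_index (OfNat.ofNat n : R⟦X⟧)) = 0 :=
  (d⁄dX R).map_natCast n

noncomputable def laneEmdenOp (y : R⟦X⟧) : R⟦X⟧ :=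
  X * d⁄dX R (d⁄dX R y) + 2 * d⁄dX R y + X * y

theorem laneEmdenOp_sub (y z : R⟦X⟧) :
    laneEmdenOp (y - z) = laneEmdenOp y - laneEmdenOp z := by
  simp only [laneEmdenOp, map_sub]
  ring

theorem coeff_succ_laneEmdenOp (y : R⟦X⟧) (n : ℕ) :
    coeff (n + 1) (laneEmdenOp y) = (n + 2) * (n + 3) * coeff (n + 2) y + coeff n y := by
  have h2 : (2 : R⟦X⟧) = C 2 := (map_ofNat C 2).symm
  simp only [laneEmdenOp, h2, map_add, coeff_succ_X_mul, coeff_C_mul, coeff_derivative]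
  push_cast
  ring

theorem eq_zero_of_laneEmdenOp_eq_zero [IsDomain R] [CharZero R] {z : R⟦X⟧}
    (hz : laneEmdenOp z = 0) (h0 : coeff 0 z = 0) (h1 : coeff 1 z = 0) : z = 0 := by
  ext n
  rw [map_zero]
  induction n using Nat.twoStepInduction with
  | zero => exact h0
  | one => exact h1
  | more n hn _ =>
    have hrec := coeff_succ_laneEmdenOp z n
    rw [hz, map_zero, hn, add_zero, eq_comm, mul_eq_zero] at hrec
    have hfactor : ((n : R) + 2) * (n + 3) ≠ 0 := by
      exact_mod_cast (by positivity : (n + 2) * (n + 3) ≠ 0)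
    exact hrec.resolve_left hfactor

theorem laneEmdenOp_X_sq_add_X_cube :
    laneEmdenOp (X ^ 2 + X ^ 3 : R⟦X⟧) = 6 * X + 12 * X ^ 2 + X ^ 3 + X ^ 4 := by
  have hd1 : d⁄dX R (X ^ 2 + X ^ 3 : R⟦X⟧) = 2 * X + 3 * X ^ 2 := by
    simp only [map_add, derivative_pow, derivative_X]
    norm_num
  have hd2 : d⁄dX R (2 * X + 3 * X ^ 2 : R⟦X⟧) = 2 + 6 * X := by
    simp only [map_add, Derivation.leibniz, derivative_pow, derivative_X, derivative_ofNat,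
      smul_eq_mul]
    norm_num
    ring
  rw [laneEmdenOp, hd1, hd2]
  ring

end PowerSeries

open PowerSeries in
theorem laneEmden_formal_example3 (y : ℚ⟦X⟧) (A : ℕ → ℚ) (hA : ∀ k, A k = coeff k y)
    (hA0 : A 0 = 0) (hA1 : A 1 = 0)
    (hode : X * (d⁄dX ℚ (d⁄dX ℚ y)) + 2 * (d⁄dX ℚ y) + X * y
      = 6 * X + 12 * X ^ 2 + X ^ 3 + X ^ 4) :
    y = X ^ 2 + X ^ 3 ∧ A 2 = 1 ∧ A 3 = 1 ∧ ∀ m : ℕ, m ≠ 2 → m ≠ 3 → A m = 0 := by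
  have hy : y = X ^ 2 + X ^ 3 := by
    refine sub_eq_zero.mp (eq_zero_of_laneEmdenOp_eq_zero ?_ ?_ ?_)
    · rw [laneEmdenOp_sub, laneEmdenOp_X_sq_add_X_cube, ← hode, laneEmdenOp, sub_self]
    · rw [map_sub, ← hA, hA0, map_add, coeff_X_pow, coeff_X_pow]; norm_num
    · rw [map_sub, ← hA, hA1, map_add, coeff_X_pow, coeff_X_pow]; norm_num
  simp only [hA, hy, map_add, coeff_X_pow]
  refine ⟨trivial, by norm_num, by norm_num, fun m hm2 hm3 => by simp [hm2, hm3]⟩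
end
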